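/- arXiv:1509.06591 — 4 statements merged into one kernel-verified Lean document; each statement's English description precedes it below -/
import Mathlib

section
/- For a permutation π of {1,...,k} and a unit vector |φ⟩ in ℂ^d, the partial trace over all k tensor factors of (I ⊗ |φ⟩⟨φ|^{⊗k}) · W_π (where W_π permutes the k+1 tensor factors of (ℂ^d)^{⊗(k+1)}) equals the identity I on ℂ^d if π(1)=1, and equals |φ⟩⟨φ| otherwise. -/
open Matrix Kronecker BigOperators
open scoped ComplexOrder

/-- Partial trace over the second (B) tensor factor. -/
noncomputable def ptraceB {A B : Type*} [Fintype B]
    (M : Matrix (A × B) (A × B) ℂ) : Matrix A A ℂ :=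
  Matrix.of fun a a' => ∑ b, M (a, b) (a', b)

/-- The marginal of a state on `A × (B₁ × ⋯ × B_k)` on the subsystems `A, B_i`. -/
noncomputable def margAB {A B : Type*} {k : ℕ} [Fintype B] [DecidableEq B] (i : Fin k)
    (ρ : Matrix (A × (Fin k → B)) (A × (Fin k → B)) ℂ) : Matrix (A × B) (A × B) ℂ :=
  Matrix.of fun p q => ∑ f : Fin k → B,
    if f i = p.2 then ρ (p.1, f) (q.1, Function.update f i q.2) else 0

/-- A density matrix: positive semidefinite with unit trace. -/
def IsDensity {n : Type*} [Fintype n] (ρ : Matrix n n ℂ) : Prop :=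
  ρ.PosSemidef ∧ ρ.trace = 1

/-- A bipartite state is separable if it is a finite convex combination of
product density matrices. -/
def IsSep {A B : Type*} [Fintype A] [Fintype B]
    (ρ : Matrix (A × B) (A × B) ℂ) : Prop :=
  ∃ (n : ℕ) (p : Fin n → ℝ) (σA : Fin n → Matrix A A ℂ) (σB : Fin n → Matrix B B ℂ),
    (∀ i, 0 ≤ p i) ∧ (∑ i, p i = 1) ∧ (∀ i, IsDensity (σA i)) ∧ (∀ i, IsDensity (σB i)) ∧
    ρ = ∑ i, (p i : ℂ) • (σA i ⊗ₖ σB i)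

/-- `ρAB` has a `k`-symmetric extension. -/
def HasSymExt {A B : Type*} [Fintype A] [Fintype B] [DecidableEq B] (k : ℕ)
    (ρAB : Matrix (A × B) (A × B) ℂ) : Prop :=
  ∃ ρ : Matrix (A × (Fin k → B)) (A × (Fin k → B)) ℂ,
    IsDensity ρ ∧ ∀ i : Fin k, margAB i ρ = ρAB

/-- The permutation operator `W_π` on `(ℂ^B)^{⊗ k}`,
`W_π |i_1 … i_k⟩ = |i_{π⁻¹(1)} … i_{π⁻¹(k)}⟩`. -/
noncomputable def Wperm {k : ℕ} {B : Type*} [DecidableEq B] (π : Equiv.Perm (Fin k)) :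
    Matrix (Fin k → B) (Fin k → B) ℂ :=
  Matrix.of fun f g => if f = g ∘ ⇑π⁻¹ then 1 else 0

/-- `(1/k!) ∑_π W_π`. -/
noncomputable def symProj {k : ℕ} {B : Type*} [DecidableEq B] :
    Matrix (Fin k → B) (Fin k → B) ℂ :=
  ((k.factorial : ℂ))⁻¹ • ∑ π : Equiv.Perm (Fin k), Wperm π

/-- `ρAB` has a `k`-bosonic extension: a `k`-symmetric extension whose support on the
`B` systems lies in the symmetric subspace. -/
def HasBosonicExt {A B : Type*} [Fintype A] [DecidableEq A] [Fintype B] [DecidableEq B] (k : ℕ)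
    (ρAB : Matrix (A × B) (A × B) ℂ) : Prop :=
  ∃ ρ : Matrix (A × (Fin k → B)) (A × (Fin k → B)) ℂ,
    IsDensity ρ ∧ (∀ i : Fin k, margAB i ρ = ρAB) ∧
    ((1 : Matrix A A ℂ) ⊗ₖ symProj) * ρ * ((1 : Matrix A A ℂ) ⊗ₖ symProj) = ρ

/-!
Fix an entry `(a, a')` of the partial trace. Moving `|a'⟩⟨a|` into the first factor turns
`I ⊗ |φ⟩⟨φ|^{⊗k}` into a tensor product of rank-one operators `⊗ᵢ |uᵢ⟩⟨vᵢ|`, with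
`u₀ = |a'⟩, v₀ = ⟨a|` and `uᵢ = |φ⟩, vᵢ = ⟨φ|` otherwise, so that the entry becomes
`tr ((⊗ᵢ |uᵢ⟩⟨vᵢ|) W_π) = ∏ᵢ ⟨v_{π i}|uᵢ⟩`. All factors with `i, π i ≠ 0` equal `⟨φ|φ⟩ = 1`;
what is left is `⟨a|a'⟩` if `π 0 = 0`, and `⟨φ|a'⟩ ⟨a|φ⟩` otherwise.
-/

theorem mul_Wperm_apply {n : ℕ} {B : Type*} [Fintype B] [DecidableEq B]
    (M : Matrix (Fin n → B) (Fin n → B) ℂ) (π : Equiv.Perm (Fin n))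
    (f g : Fin n → B) :
    (M * Wperm π : Matrix (Fin n → B) (Fin n → B) ℂ) f g = M f (g ∘ ⇑π⁻¹) := by
  simp [Matrix.mul_apply, Wperm]

section TensorRankOne

variable {n : ℕ} {B : Type*}

/-- `⊗ᵢ |uᵢ⟩⟨vᵢ|`, with the bras written as plain (already conjugated) coefficient vectors. -/
def tensorRankOne (u v : Fin n → B → ℂ) : Matrix (Fin n → B) (Fin n → B) ℂ :=
  Matrix.of fun f g => ∏ i, u i (f i) * v i (g i)

theorem trace_tensorRankOne_mul_Wperm [Fintype B] [DecidableEq B] (u v : Fin n → B → ℂ)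
    (π : Equiv.Perm (Fin n)) :
    (tensorRankOne u v * Wperm π).trace = ∏ i, u i ⬝ᵥ v (π i) := by
  have reindex : ∀ f : Fin n → B,
      ∏ i, u i (f i) * v i (f (π⁻¹ i)) = ∏ i, u i (f i) * v (π i) (f i) := by
    intro f
    rw [Finset.prod_mul_distrib, Finset.prod_mul_distrib,
      ← Equiv.prod_comp π fun i => v i (f (π⁻¹ i))]
    simp
  simp only [Matrix.trace, Matrix.diag, mul_Wperm_apply, tensorRankOne, Matrix.of_apply,
    Function.comp_apply, reindex, dotProduct, Fintype.prod_sum]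

end TensorRankOne

theorem dotProduct_star_self_eq_one {B : Type*} [Fintype B] {φ : B → ℂ}
    (hφ : ∑ i, Complex.normSq (φ i) = 1) : φ ⬝ᵥ star φ = 1 := by
  simp only [dotProduct, Pi.star_apply, Complex.star_def, Complex.mul_conj]
  exact_mod_cast hφ

section PartialTrace

variable {k : ℕ} {B : Type*} [DecidableEq B]

def idTensorPurePow (φ : B → ℂ) : Matrix (Fin (k + 1) → B) (Fin (k + 1) → B) ℂ :=
  Matrix.of fun f g => (if f 0 = g 0 then (1 : ℂ) else 0) *
    ∏ j : Fin k, φ (f j.succ) * (starRingEnd ℂ) (φ (g j.succ))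

/-- `(|a'⟩⟨a| ⊗ I) (I ⊗ |φ⟩⟨φ|^{⊗k}) = ⊗ᵢ |kets φ a' i⟩⟨bras φ a i|`. -/
def kets (φ : B → ℂ) (a' : B) : Fin (k + 1) → B → ℂ :=
  Function.update (fun _ => φ) 0 (Pi.single a' 1)

def bras (φ : B → ℂ) (a : B) : Fin (k + 1) → B → ℂ :=
  Function.update (fun _ => star φ) 0 (Pi.single a 1)

theorem tensorRankOne_kets_bras_cons_apply (φ : B → ℂ) (a a' x : B) (h : Fin k → B)
    (g : Fin (k + 1) → B) :
    tensorRankOne (kets φ a') (bras φ a) (Fin.cons x h) g =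
      if x = a' then idTensorPurePow φ (Fin.cons a h) g else 0 := by
  simp only [tensorRankOne, idTensorPurePow, kets, bras, Matrix.of_apply, Fin.prod_univ_succ,
    Fin.cons_zero, Fin.cons_succ, Function.update_self,
    Function.update_of_ne (Fin.succ_ne_zero _), Pi.single_apply, Pi.star_apply,
    Complex.star_def]
  split_ifs <;> simp_all

theorem sum_idTensorPurePow_mul_Wperm_cons [Fintype B] (φ : B → ℂ)
    (π : Equiv.Perm (Fin (k + 1))) (a a' : B) :
    ∑ h : Fin k → B, (idTensorPurePow φ * Wperm π : Matrix (Fin (k + 1) → B) _ ℂ)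
        (Fin.cons a h) (Fin.cons a' h) =
      (tensorRankOne (kets φ a') (bras φ a) * Wperm π).trace := by
  rw [Matrix.trace, ← (Fin.consEquiv fun _ => B).sum_comp, Fintype.sum_prod_type]
  simp only [Matrix.diag, Fin.consEquiv, Equiv.coe_fn_mk, mul_Wperm_apply,
    tensorRankOne_kets_bras_cons_apply]
  rw [Finset.sum_comm]
  simp

theorem prod_kets_dotProduct_bras_of_fixed [Fintype B] {φ : B → ℂ} (hφ : φ ⬝ᵥ star φ = 1)
    (a a' : B) {π : Equiv.Perm (Fin (k + 1))} (hπ : π 0 = 0) :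
    ∏ i, kets φ a' i ⬝ᵥ bras φ a (π i) = (1 : Matrix B B ℂ) a a' := by
  have hmoved (j : Fin k) : π j.succ ≠ 0 :=
    fun h => Fin.succ_ne_zero j (π.injective (h.trans hπ.symm))
  simp [Fin.prod_univ_succ, hπ, kets, bras, hmoved, Function.update_of_ne, hφ,
    Pi.single_apply, Matrix.one_apply]

theorem prod_kets_dotProduct_bras_of_not_fixed [Fintype B] {φ : B → ℂ}
    (hφ : φ ⬝ᵥ star φ = 1) (a a' : B) {π : Equiv.Perm (Fin (k + 1))} (hπ : π 0 ≠ 0) :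
    ∏ i, kets φ a' i ⬝ᵥ bras φ a (π i) = φ a * (starRingEnd ℂ) (φ a') := by
  have hpre : π.symm 0 ≠ 0 := fun h => hπ (by simpa using congrArg π h.symm)
  rw [Finset.prod_eq_mul 0 (π.symm 0) hpre.symm _ (by simp) (by simp)]
  · simp [kets, bras, hπ, hpre, Function.update_of_ne, mul_comm]
  · rintro i - ⟨hi, hi'⟩
    have hπi : π i ≠ 0 := fun h => hi' (by simp [← h])
    simp [kets, bras, hi, hπi, Function.update_of_ne, hφ]

end PartialTrace

/-- Partial trace over the last `k` factors of `(I ⊗ |φ⟩⟨φ|^{⊗k}) Wπ` is `I` if `π(1)=1`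
and `|φ⟩⟨φ|` otherwise. -/
theorem stmt0 {d k : ℕ} (π : Equiv.Perm (Fin (k + 1))) (φ : Fin d → ℂ)
    (hφ : ∑ i, Complex.normSq (φ i) = 1) :
    (Matrix.of fun a a' : Fin d => ∑ h : Fin k → Fin d,
        (((Matrix.of fun f g : Fin (k + 1) → Fin d =>
            (if f 0 = g 0 then (1 : ℂ) else 0) *
              ∏ j : Fin k, φ (f j.succ) * (starRingEnd ℂ) (φ (g j.succ))) * Wperm π :
            Matrix (Fin (k + 1) → Fin d) (Fin (k + 1) → Fin d) ℂ)
          (Fin.cons a h) (Fin.cons a' h))) =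
      if π 0 = 0 then (1 : Matrix (Fin d) (Fin d) ℂ)
      else Matrix.of fun a a' => φ a * (starRingEnd ℂ) (φ a') := by
  have hφ' := dotProduct_star_self_eq_one hφ
  ext a a'
  rw [Matrix.of_apply]
  refine (sum_idTensorPurePow_mul_Wperm_cons φ π a a').trans ?_
  rw [trace_tensorRankOne_mul_Wperm]
  split_ifs with hπ
  · exact prod_kets_dotProduct_bras_of_fixed hφ' a a' hπ
  · exact prod_kets_dotProduct_bras_of_not_fixed hφ' a a' hπ
end

section
/- If density matrices ρ_{AB_1}, ..., ρ_{AB_k} on H_A ⊗ H_B are consistent (i.e., there exists a global state on H_A ⊗ H_B^{⊗k} whose marginal on A, B_i equals ρ_{AB_i} for every i), then the average ρ_{AB} = (1/k) Σ_{i=1}^k ρ_{AB_i} has a k-symmetric extension. -/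
open Matrix Kronecker BigOperators
open scoped ComplexOrder

/-!
Average a global state `ρ` on `A × B^k` over the `k` cyclic shifts of the `B` factors. Shifting
by `j` turns the `(A, Bᵢ)` marginal into the `(A, B_{i-j})` marginal, so every `(A, Bᵢ)` marginal
of the average is `(1/k) ∑ⱼ ρ_{ABⱼ}`; positivity and unit trace survive the reindexing and the
averaging.
-/

theorem Matrix.trace_submatrix_equiv {R m n : Type*} [AddCommMonoid R] [Fintype m] [Fintype n]
    (M : Matrix n n R) (e : m ≃ n) : (M.submatrix e e).trace = M.trace :=
  e.sum_comp fun i => M i i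

theorem IsDensity.submatrix_equiv {m n : Type*} [Fintype m] [Fintype n] {ρ : Matrix n n ℂ}
    (hρ : IsDensity ρ) (e : m ≃ n) : IsDensity (ρ.submatrix e e) :=
  ⟨hρ.1.submatrix e, by rw [Matrix.trace_submatrix_equiv, hρ.2]⟩

theorem IsDensity.inv_card_smul_sum {ι n : Type*} [Fintype ι] [Nonempty ι] [Fintype n]
    {ρ : ι → Matrix n n ℂ} (hρ : ∀ i, IsDensity (ρ i)) :
    IsDensity ((Fintype.card ι : ℂ)⁻¹ • ∑ i, ρ i) := by
  have hcard : (Fintype.card ι : ℂ) ≠ 0 := Nat.cast_ne_zero.mpr Fintype.card_ne_zero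
  refine ⟨(posSemidef_sum _ fun i _ => (hρ i).1).smul ?_, ?_⟩
  · exact inv_nonneg.mpr (Nat.cast_nonneg _)
  · simp only [trace_smul, trace_sum, fun i => (hρ i).2, Finset.sum_const, Finset.card_univ,
      nsmul_eq_mul, mul_one, smul_eq_mul, inv_mul_cancel₀ hcard]

section CyclicAverage

variable {A B : Type*} {k : ℕ}

variable (A B) in
def permFactors (π : Equiv.Perm (Fin k)) : A × (Fin k → B) ≃ A × (Fin k → B) :=
  (Equiv.refl A).prodCongr (π.symm.arrowCongr (Equiv.refl B))

@[simp]
theorem permFactors_apply (π : Equiv.Perm (Fin k)) (a : A) (f : Fin k → B) :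
    permFactors A B π (a, f) = (a, f ∘ π) :=
  rfl

noncomputable def cyclicAverage [NeZero k] (ρ : Matrix (A × (Fin k → B)) (A × (Fin k → B)) ℂ) :
    Matrix (A × (Fin k → B)) (A × (Fin k → B)) ℂ :=
  (k : ℂ)⁻¹ • ∑ j : Fin k,
    ρ.submatrix (permFactors A B (Equiv.addLeft j)) (permFactors A B (Equiv.addLeft j))

theorem IsDensity.cyclicAverage [Fintype A] [Fintype B] [NeZero k]
    {ρ : Matrix (A × (Fin k → B)) (A × (Fin k → B)) ℂ} (hρ : IsDensity ρ) :
    IsDensity (cyclicAverage ρ) := by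
  simpa only [_root_.cyclicAverage, Fintype.card_fin] using
    IsDensity.inv_card_smul_sum fun j : Fin k => hρ.submatrix_equiv (permFactors A B (.addLeft j))

variable [Fintype B] [DecidableEq B]

theorem margAB_smul (i : Fin k) (c : ℂ) (ρ : Matrix (A × (Fin k → B)) (A × (Fin k → B)) ℂ) :
    margAB i (c • ρ) = c • margAB i ρ := by
  ext p q
  simp [margAB, Finset.mul_sum, mul_ite]

theorem margAB_sum {ι : Type*} (s : Finset ι) (i : Fin k)
    (ρ : ι → Matrix (A × (Fin k → B)) (A × (Fin k → B)) ℂ) :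
    margAB i (∑ j ∈ s, ρ j) = ∑ j ∈ s, margAB i (ρ j) := by
  ext p q
  simp only [margAB, of_apply, Matrix.sum_apply]
  rw [Finset.sum_comm]
  refine Finset.sum_congr rfl fun f _ => ?_
  split_ifs <;> simp

theorem margAB_submatrix_permFactors (π : Equiv.Perm (Fin k))
    (ρ : Matrix (A × (Fin k → B)) (A × (Fin k → B)) ℂ) (i : Fin k) :
    margAB i (ρ.submatrix (permFactors A B π) (permFactors A B π)) = margAB (π.symm i) ρ := by
  ext ⟨a, b⟩ ⟨a', b'⟩
  simp only [margAB, submatrix_apply, of_apply, permFactors_apply]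
  refine Fintype.sum_bijective (· ∘ π) (π.symm.arrowCongr (Equiv.refl B)).bijective _ _ fun f => ?_
  simp [Function.update_comp_equiv]

theorem margAB_cyclicAverage [NeZero k] (ρ : Matrix (A × (Fin k → B)) (A × (Fin k → B)) ℂ)
    (i : Fin k) : margAB i (cyclicAverage ρ) = (k : ℂ)⁻¹ • ∑ j, margAB j ρ := by
  rw [cyclicAverage, margAB_smul, margAB_sum]
  simp only [margAB_submatrix_permFactors, Equiv.addLeft_symm, Equiv.coe_addLeft]
  congr 1
  exact Fintype.sum_equiv (Equiv.subLeft i) _ _ fun j => by simp [neg_add_eq_sub]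

end CyclicAverage

/-- If the marginals `ρ_{AB_i}` are consistent then their average has a `k`-symmetric
extension. -/
theorem stmt7 {A B : Type*} [Fintype A] [Fintype B] [DecidableEq B] {k : ℕ}
    (ρs : Fin k → Matrix (A × B) (A × B) ℂ)
    (h : ∃ ρG : Matrix (A × (Fin k → B)) (A × (Fin k → B)) ℂ,
      IsDensity ρG ∧ ∀ i : Fin k, margAB i ρG = ρs i) :
    HasSymExt k ((k : ℂ)⁻¹ • ∑ i, ρs i) := by
  obtain ⟨ρG, hρG, hmarg⟩ := h
  rcases k.eq_zero_or_pos with rfl | hk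
  · exact ⟨ρG, hρG, fun i => i.elim0⟩
  have : NeZero k := ⟨hk.ne'⟩
  refine ⟨cyclicAverage ρG, hρG.cyclicAverage, fun i => ?_⟩
  simp only [margAB_cyclicAverage, hmarg]
end

section
/- If a two-qudit Werner state ρ_W(t) has a k-symmetric extension, then t ≥ −d/k. -/
open Matrix Kronecker BigOperators
open scoped ComplexOrder

/-- The swap operator on `ℂ^d ⊗ ℂ^d`. -/
noncomputable def swapM (d : ℕ) : Matrix (Fin d × Fin d) (Fin d × Fin d) ℂ :=
  Matrix.of fun p q => if p.1 = q.2 ∧ p.2 = q.1 then 1 else 0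

/-- The two-qudit Werner state
`ρ_W(t) = ((1+t)/2) ρ⁺ + ((1−t)/2) ρ⁻`, where `ρ⁺`, `ρ⁻` are the normalized
projections onto the symmetric and antisymmetric subspaces. -/
noncomputable def wernerState (d : ℕ) (t : ℝ) : Matrix (Fin d × Fin d) (Fin d × Fin d) ℂ :=
  (((1 + t) / 2 : ℝ) : ℂ) • ((d * (d + 1) / 2 : ℂ))⁻¹ • ((2 : ℂ)⁻¹ • (1 + swapM d)) +
  (((1 - t) / 2 : ℝ) : ℂ) • ((d * ((d : ℂ) - 1) / 2 : ℂ))⁻¹ • ((2 : ℂ)⁻¹ • (1 - swapM d))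

/-!
Pairing a `k`-symmetric extension `ρ` of `ρ_W(t)` with `N = d • 1 + ∑ᵢ SWAP_{A Bᵢ}` gives
`tr (ρ N) = d + ∑ᵢ tr (ρ_{A Bᵢ} SWAP) = d + k t`, so it suffices that `N` is positive semidefinite.

For a group acting by permutation matrices `P_γ` on a finite set, `D = ∑_γ tr (P_γ) • P_γ` is
positive definite: grouped by fixed points it is `∑_x ∑_{γ ∈ Stab x} P_γ`, where each inner sum is
`|Stab x|` times a projection and is positive on every `g` with `g x ≠ 0`. Let `S_{k+1}` permute the
`k + 1` tensor factors and `S_k` be the subgroup fixing the factor `A`. Merging the fixed point `A`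
into a cycle divides the number of invariant basis vectors by `d`, so splitting `S_{k+1}` into
cosets of `S_k` gives `d • D_{k+1} = D_k * N`. For an eigenvector `v` of the Hermitian `N` with
eigenvalue `λ` this reads `λ ⟨v, D_k v⟩ = d ⟨v, D_{k+1} v⟩ ≥ 0`, hence `λ ≥ 0`.
-/

open Equiv

lemma trace_permMatrix {X : Type*} [Fintype X] [DecidableEq X] (σ : Perm X) :
    (σ.permMatrix ℂ).trace = ∑ x, if σ x = x then 1 else 0 := by
  simp [Matrix.trace, PEquiv.toMatrix_apply]

lemma Matrix.IsHermitian.posSemidef_of_posDef_mul {n : Type*} [Fintype n] [DecidableEq n]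
    {A N : Matrix n n ℂ} (hN : N.IsHermitian) (hA : A.PosDef) (hAN : (A * N).PosSemidef) :
    N.PosSemidef := by
  rw [hN.posSemidef_iff_eigenvalues_nonneg]
  intro j
  have hv : ⇑(hN.eigenvectorBasis j) ≠ 0 := fun h =>
    hN.eigenvectorBasis.orthonormal.ne_zero j (by ext x; exact congrFun h x)
  have hpos := hA.dotProduct_mulVec_pos hv
  have hquad := hAN.dotProduct_mulVec_nonneg (hN.eigenvectorBasis j)
  rw [← mulVec_mulVec, hN.mulVec_eigenvectorBasis j, mulVec_smul, dotProduct_smul,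
    Complex.real_smul] at hquad
  have := mul_nonneg hquad (inv_nonneg.mpr hpos.le)
  rw [mul_inv_cancel_right₀ hpos.ne'] at this
  exact Complex.zero_le_real.mp this

open scoped MatrixOrder in
lemma Matrix.PosSemidef.trace_mul_nonneg {n : Type*} [Fintype n] [DecidableEq n]
    {A B : Matrix n n ℂ} (hA : A.PosSemidef) (hB : B.PosSemidef) : 0 ≤ (A * B).trace := by
  obtain ⟨C, rfl⟩ := CStarAlgebra.nonneg_iff_eq_star_mul_self.mp hB.nonneg
  rw [star_eq_conjTranspose, ← Matrix.mul_assoc, trace_mul_comm, ← Matrix.mul_assoc]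
  exact (hA.mul_mul_conjTranspose_same C).trace_nonneg

lemma trace_mul_submatrix_permMatrix {X Y : Type*} [Fintype X] [DecidableEq X] [Fintype Y]
    (M : Matrix Y Y ℂ) (σ : Perm X) (e : Y ≃ X) :
    (M * (σ.permMatrix ℂ).submatrix e e).trace = ∑ y, M y (e.symm (σ.symm (e y))) := by
  refine Finset.sum_congr rfl fun y _ => ?_
  rw [diag_apply, mul_apply, Fintype.sum_eq_single (e.symm (σ.symm (e y)))]
  · simp [PEquiv.toMatrix_apply]
  · intro x hx
    simp [PEquiv.toMatrix_apply, ← Equiv.eq_symm_apply, hx]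

section PermMatrixSum

variable {X Γ : Type*} [DecidableEq X] [Group Γ] [Fintype Γ] (φ : Γ →* Perm X)

noncomputable def permMatrixSum : Matrix X X ℂ := ∑ γ, (φ γ).permMatrix ℂ

lemma conjTranspose_permMatrixSum : (permMatrixSum φ)ᴴ = permMatrixSum φ := by
  simp only [permMatrixSum, conjTranspose_sum, conjTranspose_permMatrix, ← map_inv]
  exact Fintype.sum_equiv (Equiv.inv Γ) _ _ fun _ => rfl

variable [Fintype X]

lemma permMatrixSum_mul_self :
    permMatrixSum φ * permMatrixSum φ = (Fintype.card Γ : ℂ) • permMatrixSum φ := by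
  simp only [permMatrixSum, Finset.sum_mul_sum, ← permMatrix_mul, ← map_mul]
  rw [Finset.sum_comm, Nat.cast_smul_eq_nsmul, ← Finset.card_univ, ← Finset.sum_const]
  exact Finset.sum_congr rfl fun γ _ => Fintype.sum_equiv (Equiv.mulLeft γ) _ _ fun _ => rfl

lemma dotProduct_permMatrixSum_mulVec (g : X → ℂ) :
    star g ⬝ᵥ (permMatrixSum φ *ᵥ g)
      = (Fintype.card Γ : ℂ)⁻¹ * (star (permMatrixSum φ *ᵥ g) ⬝ᵥ (permMatrixSum φ *ᵥ g)) := by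
  have hΓ : (Fintype.card Γ : ℂ) ≠ 0 := Nat.cast_ne_zero.mpr Fintype.card_ne_zero
  rw [star_mulVec, ← dotProduct_mulVec, mulVec_mulVec, conjTranspose_permMatrixSum,
    permMatrixSum_mul_self, smul_mulVec, dotProduct_smul, smul_eq_mul, inv_mul_cancel_left₀ hΓ]

lemma permMatrixSum_mulVec_apply_of_forall_fixed (g : X → ℂ) {x : X} (hx : ∀ γ, φ γ x = x) :
    (permMatrixSum φ *ᵥ g) x = Fintype.card Γ * g x := by
  simp [permMatrixSum, sum_mulVec, permMatrix_mulVec, hx]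

lemma dotProduct_permMatrixSum_mulVec_nonneg (g : X → ℂ) :
    0 ≤ star g ⬝ᵥ (permMatrixSum φ *ᵥ g) := by
  rw [dotProduct_permMatrixSum_mulVec]
  exact mul_nonneg (by positivity) (dotProduct_star_self_nonneg _)

lemma dotProduct_permMatrixSum_mulVec_pos {g : X → ℂ} {x : X} (hx : ∀ γ, φ γ x = x)
    (hg : g x ≠ 0) : 0 < star g ⬝ᵥ (permMatrixSum φ *ᵥ g) := by
  have hne : permMatrixSum φ *ᵥ g ≠ 0 := fun h => by
    simpa [hg] using (permMatrixSum_mulVec_apply_of_forall_fixed φ g hx).symm.trans (congrFun h x)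
  rw [dotProduct_permMatrixSum_mulVec]
  exact mul_pos (by positivity) (dotProduct_star_self_pos_iff.mpr hne)

noncomputable def permCharSum : Matrix X X ℂ :=
  ∑ γ, ((φ γ).permMatrix ℂ).trace • (φ γ).permMatrix ℂ

open scoped Classical in
lemma permCharSum_eq_sum_stabilizer :
    permCharSum φ
      = ∑ x : X, permMatrixSum (φ.comp ((MulAction.stabilizer (Perm X) x).comap φ).subtype) := by
  simp only [permCharSum, permMatrixSum, trace_permMatrix, Finset.sum_smul, ite_smul, one_smul,
    zero_smul]
  rw [Finset.sum_comm]
  refine Finset.sum_congr rfl fun x _ => ?_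
  rw [← Finset.sum_filter]
  exact Finset.sum_subtype _ (by simp [Perm.smul_def]) _

lemma posDef_permCharSum : (permCharSum φ).PosDef := by
  classical
  rw [permCharSum_eq_sum_stabilizer]
  refine .of_dotProduct_mulVec_pos ?_ fun g hg => ?_
  · exact isSelfAdjoint_sum _ fun x _ => conjTranspose_permMatrixSum _
  obtain ⟨x, hx⟩ := Function.ne_iff.mp hg
  rw [sum_mulVec, dotProduct_sum]
  refine Finset.sum_pos' (fun y _ => dotProduct_permMatrixSum_mulVec_nonneg _ g)
    ⟨x, Finset.mem_univ x, dotProduct_permMatrixSum_mulVec_pos _ (fun γ => ?_) hx⟩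
  exact γ.2

end PermMatrixSum

section TensorPermutations

variable {W : Type*} (C : Type*)

-- The permutation of the tensor factors of `(ℂ^C)^{⊗ W}`, acting on the basis `W → C`.
def tensorPerm : Perm W →* Perm (W → C) where
  toFun σ := σ.arrowCongr (Equiv.refl C)
  map_one' := rfl
  map_mul' _ _ := rfl

variable {C}

lemma tensorPerm_apply (σ : Perm W) (f : W → C) : tensorPerm C σ f = f ∘ σ.symm := rfl

lemma tensorPerm_symm_apply (σ : Perm W) (f : W → C) : (tensorPerm C σ).symm f = f ∘ σ := rfl

lemma tensorPerm_apply_eq_self_iff (σ : Perm W) (f : W → C) :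
    tensorPerm C σ f = f ↔ f ∘ σ = f := by
  rw [tensorPerm_apply, Equiv.comp_symm_eq, eq_comm]

def optionCongrHom (α : Type*) : Perm α →* Perm (Option α) where
  toFun := optionCongr
  map_one' := optionCongr_one
  map_mul' σ τ := optionCongr_trans τ σ

variable {α : Type*}

lemma comp_optionCongr_eq_self_iff (τ : Perm α) (f : Option α → C) :
    f ∘ optionCongr τ = f ↔ (f ∘ some) ∘ τ = f ∘ some := by
  simp [funext_iff, Option.forall]

variable [DecidableEq α] in
lemma comp_swap_mul_optionCongr_eq_self_iff (i : α) (τ : Perm α) (f : Option α → C) :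
    f ∘ (swap none (some i) * optionCongr τ) = f ↔
      (f ∘ some) ∘ τ = f ∘ some ∧ f none = f (some i) := by
  have hswap : f none = f (some i) → f ∘ swap none (some i) = f := fun h => by
    ext w; rcases eq_or_ne w none with rfl | h0
    · simp [h]
    rcases eq_or_ne w (some i) with rfl | hi
    · simp [h]
    · rw [Function.comp_apply, swap_apply_of_ne_of_ne h0 hi]
  rw [← comp_optionCongr_eq_self_iff, Perm.coe_mul, ← Function.comp_assoc]
  constructor
  · intro h
    have h0 : f none = f (some i) := by simpa using (congrFun h none).symm
    exact ⟨by rwa [hswap h0] at h, h0⟩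
  · rintro ⟨h, h0⟩
    rwa [hswap h0]

variable [Fintype C] [DecidableEq C]

lemma trace_permMatrix_tensorPerm [Fintype W] [DecidableEq W] (σ : Perm W) :
    ((tensorPerm C σ).permMatrix ℂ).trace = ∑ f : W → C, if f ∘ σ = f then 1 else 0 := by
  simp only [trace_permMatrix, tensorPerm_apply_eq_self_iff]

variable [Fintype α] [DecidableEq α]

lemma card_mul_trace_tensorPerm_swap_mul_optionCongr (i : α) (τ : Perm α) :
    (Fintype.card C : ℂ) * ((tensorPerm C (swap none (some i) * optionCongr τ)).permMatrix ℂ).trace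
      = ((tensorPerm C (optionCongr τ)).permMatrix ℂ).trace := by
  simp only [trace_permMatrix_tensorPerm, comp_optionCongr_eq_self_iff,
    comp_swap_mul_optionCongr_eq_self_iff]
  set e : (Option α → C) ≃ C × (α → C) := piOptionEquivProd
  have hsome (p : C × (α → C)) : e.symm p ∘ some = p.2 := rfl
  have hsome' (p : C × (α → C)) : e.symm p (some i) = p.2 i := rfl
  have hnone (p : C × (α → C)) : e.symm p none = p.1 := rfl
  rw [← e.symm.sum_comp, ← e.symm.sum_comp]
  simp only [hsome, hsome', hnone, Fintype.sum_prod_type, ite_and]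
  rw [Finset.sum_comm]
  simp

variable (C α)

-- The factor `none` plays the role of `A`.
noncomputable def jucysMurphy : Matrix (Option α → C) (Option α → C) ℂ :=
  ∑ i : α, (tensorPerm C (swap none (some i))).permMatrix ℂ

lemma card_smul_permCharSum_tensorPerm :
    (Fintype.card C : ℂ) • permCharSum (tensorPerm C (W := Option α))
      = permCharSum ((tensorPerm C).comp (optionCongrHom α))
          * ((Fintype.card C : ℂ) • 1 + jucysMurphy C α) := by
  rw [permCharSum, ← Equiv.sum_comp Perm.decomposeOption.symm, Fintype.sum_prod_type,
    Fintype.sum_option]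
  simp only [Perm.decomposeOption_symm_apply, swap_self, ← Perm.one_def, one_mul]
  rw [smul_add, mul_add, Matrix.mul_smul, mul_one, jucysMurphy, Finset.mul_sum]
  congr 1
  rw [Finset.smul_sum]
  refine Finset.sum_congr rfl fun i _ => ?_
  rw [permCharSum, Finset.sum_mul, Finset.smul_sum]
  refine Finset.sum_congr rfl fun τ _ => ?_
  rw [smul_smul, card_mul_trace_tensorPerm_swap_mul_optionCongr, map_mul, permMatrix_mul,
    Matrix.smul_mul]
  rfl

lemma isHermitian_natCast_smul_one_add_jucysMurphy :
    ((Fintype.card C : ℂ) • 1 + jucysMurphy C α).IsHermitian := by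
  refine ((IsSelfAdjoint.natCast _).smul (.one _)).add (isSelfAdjoint_sum _ fun i _ => ?_)
  rw [IsSelfAdjoint, star_eq_conjTranspose, conjTranspose_permMatrix, ← map_inv, swap_inv]

lemma posSemidef_natCast_smul_one_add_jucysMurphy :
    ((Fintype.card C : ℂ) • 1 + jucysMurphy C α).PosSemidef := by
  refine (isHermitian_natCast_smul_one_add_jucysMurphy C α).posSemidef_of_posDef_mul
    (posDef_permCharSum ((tensorPerm C).comp (optionCongrHom α))) ?_
  rw [← card_smul_permCharSum_tensorPerm]
  exact (posDef_permCharSum (tensorPerm C)).posSemidef.smul (Nat.cast_nonneg _)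

end TensorPermutations

section WernerExtension

variable {d k : ℕ}

lemma trace_margAB_mul_swapM (ρ : Matrix (Fin d × (Fin k → Fin d)) (Fin d × (Fin k → Fin d)) ℂ)
    (i : Fin k) :
    (margAB i ρ * swapM d).trace = ∑ a, ∑ w, ρ (a, w) (w i, Function.update w i a) := by
  have hswap (p : Fin d × Fin d) : (margAB i ρ * swapM d) p p = margAB i ρ p (p.2, p.1) := by
    rw [mul_apply, Fintype.sum_eq_single (p.2, p.1)]
    · simp [swapM]
    · intro q hq
      simp only [ne_eq, Prod.ext_iff, not_and] at hq
      simp +contextual [swapM, hq]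
  rw [Matrix.trace, Fintype.sum_congr _ _ fun p => (diag_apply _ p).trans (hswap p),
    Fintype.sum_prod_type]
  simp only [margAB, of_apply]
  refine Finset.sum_congr rfl fun a _ => ?_
  rw [Finset.sum_comm]
  simp

lemma piOptionEquivProd_comp_swap (i : Fin k) (a : Fin d) (w : Fin k → Fin d) :
    piOptionEquivProd (piOptionEquivProd.symm (a, w) ∘ swap none (some i))
      = (w i, Function.update w i a) := by
  refine Prod.ext rfl (funext fun j => ?_)
  rcases eq_or_ne j i with rfl | hj
  · simp
  · simp [hj, swap_apply_of_ne_of_ne]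

variable (d k) in
noncomputable def swapSum : Matrix (Fin d × (Fin k → Fin d)) (Fin d × (Fin k → Fin d)) ℂ :=
  (jucysMurphy (Fin d) (Fin k)).submatrix (piOptionEquivProd (β := fun _ => Fin d)).symm
    (piOptionEquivProd (β := fun _ => Fin d)).symm

lemma trace_mul_swapSum (ρ : Matrix (Fin d × (Fin k → Fin d)) (Fin d × (Fin k → Fin d)) ℂ) :
    (ρ * swapSum d k).trace = ∑ i, (margAB i ρ * swapM d).trace := by
  have hsum : swapSum d k = ∑ i, ((tensorPerm (Fin d) (swap none (some i))).permMatrix ℂ).submatrix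
      piOptionEquivProd.symm piOptionEquivProd.symm := by
    ext p q
    simp [swapSum, jucysMurphy, Matrix.sum_apply]
  rw [hsum, Matrix.mul_sum, trace_sum]
  refine Finset.sum_congr rfl fun i _ => ?_
  rw [trace_mul_submatrix_permMatrix, trace_margAB_mul_swapM, Fintype.sum_prod_type]
  simp only [symm_symm, tensorPerm_symm_apply, piOptionEquivProd_comp_swap]

variable (d k) in
lemma posSemidef_natCast_smul_one_add_swapSum : ((d : ℂ) • 1 + swapSum d k).PosSemidef := by
  convert (posSemidef_natCast_smul_one_add_jucysMurphy (Fin d) (Fin k)).submatrix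
    (piOptionEquivProd (β := fun _ => Fin d)).symm using 1
  ext p q
  simp [swapSum, one_apply]

lemma swapM_eq_permMatrix : swapM d = Perm.permMatrix ℂ (prodComm (Fin d) (Fin d)) := by
  ext p q
  simp [swapM, PEquiv.toMatrix_apply, Prod.ext_iff, eq_comm, and_comm]

lemma trace_wernerState_mul_swapM (hd : 2 ≤ d) (t : ℝ) :
    (wernerState d t * swapM d).trace = t := by
  have hS : swapM d * swapM d = 1 := by
    have : (prodComm (Fin d) (Fin d) : Perm (Fin d × Fin d)) * prodComm _ _ = 1 := by
      ext <;> rfl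
    rw [swapM_eq_permMatrix, ← permMatrix_mul, this, permMatrix_one]
  have hS_trace : (swapM d).trace = d := by
    simp only [swapM_eq_permMatrix, trace_permMatrix, Fintype.sum_prod_type, prodComm_apply,
      Prod.swap_prod_mk, Prod.mk.injEq, and_iff_left_of_imp Eq.symm, Finset.sum_ite_eq',
      Finset.mem_univ, if_true]
    simp
  have hd0 : (d : ℂ) ≠ 0 := by exact_mod_cast (by omega : d ≠ 0)
  have hd1 : (d : ℂ) + 1 ≠ 0 := by exact_mod_cast (by omega : d + 1 ≠ 0)
  have hd2 : (d : ℂ) - 1 ≠ 0 := by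
    rw [sub_ne_zero]; exact_mod_cast (by omega : d ≠ 1)
  simp only [wernerState, add_mul, smul_mul, sub_mul, one_mul, hS, trace_add, trace_smul, trace_sub,
    trace_one, hS_trace, Fintype.card_prod, Fintype.card_fin, smul_eq_mul]
  push_cast
  field_simp
  ring

end WernerExtension

theorem stmt10_general {d k : ℕ} (hd : 2 ≤ d) (hk : 0 < k) (t : ℝ)
    (h : HasSymExt k (wernerState d t)) : -(d : ℝ) / k ≤ t := by
  obtain ⟨ρ, ⟨hρ, htr⟩, hmarg⟩ := h
  have hwitness := hρ.trace_mul_nonneg (posSemidef_natCast_smul_one_add_swapSum d k)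
  rw [Matrix.mul_add, trace_add, Matrix.mul_smul, Matrix.mul_one, trace_smul, htr,
    trace_mul_swapSum] at hwitness
  simp only [hmarg, trace_wernerState_mul_swapM hd, Finset.sum_const, Finset.card_univ,
    Fintype.card_fin, smul_eq_mul, mul_one, nsmul_eq_mul] at hwitness
  have hreal : 0 ≤ (d : ℝ) + k * t := by exact_mod_cast hwitness
  rw [div_le_iff₀ (by exact_mod_cast hk)]
  linarith

/-- If a two-qudit Werner state has a `k`-symmetric extension then `t ≥ -d/k`. -/
theorem stmt10 {d k : ℕ} (hd : 2 ≤ d) (hk : 0 < k) (t : ℝ) (ht : -1 ≤ t ∧ t ≤ 1)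
    (h : HasSymExt k (wernerState d t)) : -(d : ℝ) / k ≤ t :=
  stmt10_general hd hk t h
end

section
/- For any bipartite density matrix ρ_{AB} on H_A ⊗ H_B with dim H_B = d_B, the state σ_{AB} = (1/(d_B+1))(ρ_A ⊗ I_B + ρ_{AB}) is separable. -/
/-!
Let `R` be a finite commutative ring with a primitive additive character `ψ` and `2 ≠ 0`. Averaging
`(φ_f φ_f^*)^{⊗2}` over the phase vectors `φ_f = (ψ (f b))_b`, `f : B → R`, gives `1 + SWAP`
except on the diagonal `x = y = x' = y'`, where it gives only `1`; adding the standard basis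
vectors with weight one supplies the missing diagonal term. Contracting one copy of this weighted
2-design against `ρ_{AB}` on `B` writes `ρ_A ⊗ 1 + ρ_{AB}` as a nonnegative combination of
Kronecker products `⟨φ|ρ|φ⟩_B ⊗ φ φ^*` of positive semidefinite matrices, and normalising by its
trace `d_B + 1` exhibits the state as separable.
-/

open Matrix Kronecker BigOperators
open scoped ComplexOrder

theorem AddChar.map_sum_eq_prod {ι A M : Type*} [AddCommMonoid A] [CommMonoid M]
    (ψ : AddChar A M) (s : Finset ι) (f : ι → A) : ψ (∑ i ∈ s, f i) = ∏ i ∈ s, ψ (f i) :=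
  map_prod ψ.toMonoidHom (fun i => Multiplicative.ofAdd (f i)) s

/-- Entrywise form of `∑ₛ wₛ (φₛ φₛ^*)^{⊗2} = 1 + SWAP`. -/
def IsTwoDesign {ι B : Type*} [Fintype ι] [DecidableEq B] (w : ι → ℝ) (φ : ι → B → ℂ) : Prop :=
  ∀ x y x' y', ∑ s, (w s : ℂ) * (φ s x * star (φ s y) * (φ s x' * star (φ s y'))) =
    (if x = y ∧ x' = y' then 1 else 0) + (if x = y' ∧ x' = y then 1 else 0)

section PhaseBasis

noncomputable def phaseBasisWeight (R B : Type*) [Fintype R] [Fintype B] : (B → R) ⊕ B → ℝ :=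
  Sum.elim (fun _ => ((Fintype.card R : ℝ) ^ Fintype.card B)⁻¹) (fun _ => 1)

def phaseBasisVec {R B : Type*} [AddMonoid R] [DecidableEq B] (ψ : AddChar R ℂ) :
    (B → R) ⊕ B → B → ℂ :=
  Sum.elim (fun f b => ψ (f b)) (fun b => Pi.single b 1)

theorem phaseBasisWeight_nonneg {R B : Type*} [Fintype R] [Fintype B] (s : (B → R) ⊕ B) :
    0 ≤ phaseBasisWeight R B s := by
  cases s <;> simp [phaseBasisWeight]

variable {R B : Type*} [CommRing R] [Fintype R] [DecidableEq R] {ψ : AddChar R ℂ}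
  [Fintype B] [DecidableEq B]

theorem AddChar.sum_apply_dotProduct (hψ : ψ.IsPrimitive) (c : B → R) :
    ∑ f : B → R, ψ (f ⬝ᵥ c) = if c = 0 then (Fintype.card R : ℂ) ^ Fintype.card B else 0 := by
  simp_rw [dotProduct, AddChar.map_sum_eq_prod]
  rw [← Fintype.prod_sum fun y z => ψ (z * c y)]
  simp_rw [AddChar.sum_mulShift _ hψ]
  split_ifs with hc
  · simp [hc]
  · obtain ⟨y, hy⟩ := Function.ne_iff.mp hc
    exact Finset.prod_eq_zero (Finset.mem_univ y) (by simpa using hy)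

theorem sum_phase_fourth_moment (hψ : ψ.IsPrimitive) (h2 : (2 : R) ≠ 0) (x y x' y' : B) :
    ∑ f : B → R, ψ (f x) * star (ψ (f y)) * (ψ (f x') * star (ψ (f y'))) =
      if (x = y ∧ x' = y') ∨ (x = y' ∧ x' = y) then (Fintype.card R : ℂ) ^ Fintype.card B
      else 0 := by
  have hmoment (f : B → R) : ψ (f x) * star (ψ (f y)) * (ψ (f x') * star (ψ (f y'))) =
      ψ (f ⬝ᵥ (Pi.single x 1 + Pi.single x' 1 - Pi.single y 1 - Pi.single y' 1)) := by
    simp only [dotProduct_sub, dotProduct_add, dotProduct_single, mul_one]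
    simp only [sub_eq_add_neg, AddChar.map_add_eq_mul, AddChar.map_neg_eq_conj, RCLike.star_def]
    ring
  have hsingle : (Pi.single x 1 + Pi.single x' 1 - Pi.single y 1 - Pi.single y' 1 : B → R) = 0 ↔
      (x = y ∧ x' = y') ∨ (x = y' ∧ x' = y) := by
    have h1 : (1 : R) ≠ 0 := fun h => h2 (by rw [← one_add_one_eq_two, h, add_zero])
    rw [sub_sub, sub_eq_zero, Pi.single_add_single_eq_single_add_single h1 h1, one_add_one_eq_two]
    simp [h2]
  simp_rw [hmoment, AddChar.sum_apply_dotProduct hψ, hsingle]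

theorem sum_single_fourth_moment (x y x' y' : B) :
    ∑ b : B, (Pi.single b 1 : B → ℂ) x * star ((Pi.single b 1 : B → ℂ) y) *
      ((Pi.single b 1 : B → ℂ) x' * star ((Pi.single b 1 : B → ℂ) y')) =
      if (x = y ∧ x' = y') ∧ (x = y' ∧ x' = y) then 1 else 0 := by
  simp only [Pi.single_apply, apply_ite star, star_one, star_zero]
  rw [Finset.sum_eq_single x]
  · split_ifs <;> grind
  · intro b _ hb
    grind
  · simp

theorem isTwoDesign_phaseBasis (hψ : ψ.IsPrimitive) (h2 : (2 : R) ≠ 0) :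
    IsTwoDesign (phaseBasisWeight R B) (phaseBasisVec ψ) := by
  intro x y x' y'
  simp only [Fintype.sum_sum_type, phaseBasisWeight, phaseBasisVec, Sum.elim_inl, Sum.elim_inr,
    Complex.ofReal_one, one_mul, ← Finset.mul_sum, sum_phase_fourth_moment hψ h2,
    sum_single_fourth_moment]
  have hcard : (Fintype.card R : ℂ) ^ Fintype.card B ≠ 0 := by simp
  push_cast
  split_ifs <;> grind

end PhaseBasis

theorem trace_ptraceB {A B : Type*} [Fintype A] [Fintype B] (M : Matrix (A × B) (A × B) ℂ) :
    (ptraceB M).trace = M.trace := by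
  simp [trace, ptraceB, Fintype.sum_prod_type]

noncomputable def compressB {A B : Type*} [Fintype B] (φ : B → ℂ)
    (ρ : Matrix (A × B) (A × B) ℂ) : Matrix A A ℂ :=
  Matrix.of fun a a' => ∑ b, ∑ b', star (φ b) * ρ (a, b) (a', b') * φ b'

theorem compressB_eq_conjTranspose_mul_mul {A B : Type*} [Fintype A] [DecidableEq A] [Fintype B]
    (φ : B → ℂ) (ρ : Matrix (A × B) (A × B) ℂ) :
    compressB φ ρ = (of fun (x : A × B) a => if x.1 = a then φ x.2 else 0)ᴴ * ρ *
      of fun (x : A × B) a => if x.1 = a then φ x.2 else 0 := by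
  ext a a'
  simp only [compressB, of_apply, mul_apply, conjTranspose_apply, Fintype.sum_prod_type,
    apply_ite star, star_zero, ite_mul, mul_ite, zero_mul, mul_zero, Finset.sum_mul]
  simp only [Finset.sum_ite_irrel, Finset.sum_const_zero, Finset.sum_ite_eq', Finset.mem_univ,
    if_true]
  rw [Finset.sum_comm]

theorem posSemidef_compressB {A B : Type*} [Fintype A] [Fintype B] (φ : B → ℂ)
    {ρ : Matrix (A × B) (A × B) ℂ} (hρ : ρ.PosSemidef) : (compressB φ ρ).PosSemidef := by
  classical
  rw [compressB_eq_conjTranspose_mul_mul]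
  exact hρ.conjTranspose_mul_mul_same _

theorem IsTwoDesign.sum_smul_compressB_kronecker {ι A B : Type*} [Fintype ι] [Fintype B]
    [DecidableEq B] {w : ι → ℝ} {φ : ι → B → ℂ} (hφ : IsTwoDesign w φ)
    (ρ : Matrix (A × B) (A × B) ℂ) :
    ∑ s, (w s : ℂ) • (compressB (φ s) ρ ⊗ₖ vecMulVec (φ s) (star (φ s))) =
      ptraceB ρ ⊗ₖ (1 : Matrix B B ℂ) + ρ := by
  ext ⟨a, i⟩ ⟨a', j⟩
  simp only [Matrix.sum_apply, Matrix.smul_apply, kroneckerMap_apply, Matrix.add_apply, ptraceB,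
    compressB, vecMulVec_apply, of_apply, one_apply, smul_eq_mul, Pi.star_apply]
  calc ∑ s, (w s : ℂ) * ((∑ b, ∑ b', star (φ s b) * ρ (a, b) (a', b') * φ s b') *
          (φ s i * star (φ s j)))
      = ∑ b, ∑ b', ρ (a, b) (a', b') *
          ∑ s, (w s : ℂ) * (φ s i * star (φ s b) * (φ s b' * star (φ s j))) := by
        simp only [Finset.mul_sum, Finset.sum_mul]
        rw [Finset.sum_comm]
        refine Finset.sum_congr rfl fun b _ => ?_
        rw [Finset.sum_comm]
        exact Finset.sum_congr rfl fun b' _ => Finset.sum_congr rfl fun s _ => by ring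
    _ = ∑ b, ∑ b', ρ (a, b) (a', b') *
          ((if i = b ∧ b' = j then 1 else 0) + (if i = j ∧ b' = b then 1 else 0)) := by
        refine Finset.sum_congr rfl fun b _ => Finset.sum_congr rfl fun b' _ => ?_
        rw [hφ i b b' j]
    _ = (∑ b, ρ (a, b) (a', b)) * (if i = j then 1 else 0) + ρ (a, i) (a', j) := by
        by_cases hij : i = j <;>
          simp [hij, mul_add, Finset.sum_add_distrib, ite_and, add_comm]

theorem Matrix.PosSemidef.exists_eq_smul_isDensity {n : Type*} [Fintype n] [Nonempty n]
    {M : Matrix n n ℂ} (hM : M.PosSemidef) :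
    ∃ t : ℝ, 0 ≤ t ∧ ∃ σ, IsDensity σ ∧ M = (t : ℂ) • σ := by
  classical
  obtain ⟨t, ht, htr⟩ := RCLike.nonneg_iff_exists_ofReal.mp hM.trace_nonneg
  replace htr : (t : ℂ) = M.trace := htr
  refine ⟨t, ht, ?_⟩
  rcases ht.eq_or_lt with rfl | ht
  · refine ⟨(Fintype.card n : ℂ)⁻¹ • 1, ⟨PosSemidef.one.smul (by positivity), ?_⟩, ?_⟩
    · simp [trace_smul]
    · rw [Complex.ofReal_zero, zero_smul, ← hM.trace_eq_zero_iff, ← htr, Complex.ofReal_zero]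
  · have ht' : (t : ℂ) ≠ 0 := by exact_mod_cast ht.ne'
    refine ⟨(t : ℂ)⁻¹ • M, ⟨hM.smul (by positivity), ?_⟩, ?_⟩
    · rw [trace_smul, ← htr, smul_eq_mul, inv_mul_cancel₀ ht']
    · rw [smul_smul, mul_inv_cancel₀ ht', one_smul]

theorem isSep_sum_smul_kronecker_of_isDensity {ι A B : Type*} [Fintype ι] [Fintype A]
    [Fintype B] (p : ι → ℝ) (σA : ι → Matrix A A ℂ) (σB : ι → Matrix B B ℂ)
    (hp : ∀ i, 0 ≤ p i) (hp₁ : ∑ i, p i = 1) (hσA : ∀ i, IsDensity (σA i))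
    (hσB : ∀ i, IsDensity (σB i)) :
    IsSep (∑ i, (p i : ℂ) • (σA i ⊗ₖ σB i)) := by
  let e := (Fintype.equivFin ι).symm
  refine ⟨Fintype.card ι, p ∘ e, σA ∘ e, σB ∘ e, fun i => hp _, ?_, fun i => hσA _,
    fun i => hσB _, ?_⟩
  · rwa [← e.sum_comp p] at hp₁
  · exact (e.sum_comp fun i => (p i : ℂ) • (σA i ⊗ₖ σB i)).symm

theorem isSep_sum_smul_kronecker_of_posSemidef {ι A B : Type*} [Fintype ι] [Fintype A]
    [Fintype B] (w : ι → ℝ) (M : ι → Matrix A A ℂ) (N : ι → Matrix B B ℂ) (hw : ∀ s, 0 ≤ w s)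
    (hM : ∀ s, (M s).PosSemidef) (hN : ∀ s, (N s).PosSemidef)
    (htr : (∑ s, (w s : ℂ) • (M s ⊗ₖ N s)).trace = 1) :
    IsSep (∑ s, (w s : ℂ) • (M s ⊗ₖ N s)) := by
  obtain ⟨a, b⟩ : Nonempty (A × B) := by
    by_contra h
    rw [not_nonempty_iff] at h
    simp [trace_eq_zero_of_isEmpty] at htr
  have : Nonempty A := ⟨a⟩
  have : Nonempty B := ⟨b⟩
  choose t ht σ hσ hMσ using fun s => (hM s).exists_eq_smul_isDensity
  choose u hu τ hτ hNτ using fun s => (hN s).exists_eq_smul_isDensity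
  have hterm (s) : (w s : ℂ) • (M s ⊗ₖ N s) = ((w s * t s * u s : ℝ) : ℂ) • (σ s ⊗ₖ τ s) := by
    rw [hMσ, hNτ, smul_kronecker, kronecker_smul, smul_smul, smul_smul]
    push_cast
    ring_nf
  simp only [hterm] at htr ⊢
  refine isSep_sum_smul_kronecker_of_isDensity _ σ τ
    (fun s => mul_nonneg (mul_nonneg (hw s) (ht s)) (hu s)) ?_ hσ hτ
  simp only [trace_sum, trace_smul, trace_kronecker, (hσ _).2, (hτ _).2, mul_one,
    smul_eq_mul] at htr
  exact_mod_cast htr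

theorem stmt13_general {A B : Type*} [Fintype A] [Fintype B] [DecidableEq B]
    (ρAB : Matrix (A × B) (A × B) ℂ) (hρ : IsDensity ρAB) :
    IsSep (((Fintype.card B + 1 : ℂ))⁻¹ •
      (ptraceB ρAB ⊗ₖ (1 : Matrix B B ℂ) + ρAB)) := by
  set φ : (B → ZMod 3) ⊕ B → B → ℂ := phaseBasisVec ZMod.stdAddChar
  have hdesign : IsTwoDesign (phaseBasisWeight (ZMod 3) B) φ :=
    isTwoDesign_phaseBasis (ZMod.isPrimitive_stdAddChar 3) (by decide)
  set w := fun s => ((Fintype.card B : ℝ) + 1)⁻¹ * phaseBasisWeight (ZMod 3) B s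
  have hsum : ((Fintype.card B + 1 : ℂ))⁻¹ • (ptraceB ρAB ⊗ₖ (1 : Matrix B B ℂ) + ρAB) =
      ∑ s, (w s : ℂ) • (compressB (φ s) ρAB ⊗ₖ vecMulVec (φ s) (star (φ s))) := by
    simp only [← hdesign.sum_smul_compressB_kronecker ρAB, Finset.smul_sum, smul_smul, w]
    push_cast
    rfl
  have htr : (ptraceB ρAB ⊗ₖ (1 : Matrix B B ℂ) + ρAB).trace = Fintype.card B + 1 := by
    rw [trace_add, trace_kronecker, trace_ptraceB, hρ.2, trace_one, one_mul]
  rw [hsum]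
  refine isSep_sum_smul_kronecker_of_posSemidef _ _ _
    (fun s => mul_nonneg (by positivity) (phaseBasisWeight_nonneg s))
    (fun s => posSemidef_compressB _ hρ.1) (fun s => posSemidef_vecMulVec_self_star _) ?_
  rw [← hsum, trace_smul, htr, smul_eq_mul, inv_mul_cancel₀ (by positivity)]

/-- For any bipartite density matrix `ρ_{AB}`, the state
`(ρ_A ⊗ I_B + ρ_{AB})/(d_B + 1)` is separable. -/
theorem stmt13 {A B : Type*} [Fintype A] [DecidableEq A] [Fintype B] [DecidableEq B]
    (ρAB : Matrix (A × B) (A × B) ℂ) (hρ : IsDensity ρAB) :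
    IsSep (((Fintype.card B + 1 : ℂ))⁻¹ •
      (ptraceB ρAB ⊗ₖ (1 : Matrix B B ℂ) + ρAB)) :=
  stmt13_general ρAB hρ
end
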